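/- The Kravatz diagonal is a chain map: Δ_2 ∘ ∂ = (∂ ⊗ 1 + 1 ⊗ ∂) ∘ Δ_2 as maps C → C ⊗ C, where (1 ⊗ ∂) is evaluated with the Koszul sign convention; i.e. ∂ is a coderivation of Δ_2 and the A∞-coalgebra relation holds in arity 2. -/

import Mathlib

noncomputable section

/-- Cells of an `n`-gon: `v i` models the vertex `v_{i+1}`, `e i` models the edge `e_{i+1}`
(so indices are 0-based), and `F` models the 2-cell `P`. -/
inductive Cell (n : ℕ) : Type where
  | v : Fin n → Cell n
  | e : Fin n → Cell n
  | F : Cell n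
deriving DecidableEq

/-- `Tens R n k` models `C^{⊗ k}`, the free `R`-module on `k`-tuples of cells. -/
abbrev Tens (R : Type) [CommRing R] (n k : ℕ) : Type := (Fin k → Cell n) →₀ R

/-- The basis tensor corresponding to a tuple of cells. -/
def bt (R : Type) [CommRing R] {n k : ℕ} (x : Fin k → Cell n) : Tens R n k :=
  Finsupp.single x 1

/-- Degree of a cell. -/
def degC {n : ℕ} : Cell n → ℕ
  | .v _ => 0
  | .e _ => 1
  | .F => 2

/-- `(-1)^m` in `R`. -/
def sgn (R : Type) [CommRing R] (m : ℤ) : R := if Even m then 1 else -1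

/-- The boundary operator on basis cells: `∂(v_i) = 0`, `∂(e_i) = v_{i+1} - v_i` for `i < n`,
`∂(e_n) = v_n - v_1`, `∂(P) = e_1 + ⋯ + e_{n-1} - e_n`. -/
def dB (R : Type) [CommRing R] (n : ℕ) : Cell n → Tens R n 1
  | .v _ => 0
  | .e i =>
      if h : (i : ℕ) + 1 < n then
        bt R (fun _ => Cell.v ⟨(i : ℕ) + 1, h⟩) - bt R (fun _ => Cell.v i)
      else
        bt R (fun _ => Cell.v i) - bt R (fun _ => Cell.v ⟨0, i.pos⟩)
  | .F => ∑ i : Fin n, (if (i : ℕ) + 1 < n then (1 : R) else -1) • bt R (fun _ => Cell.e i)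

/-- `Σ_{0<i_1<⋯<i_k<n} e_{i_1} ⊗ ⋯ ⊗ e_{i_k}` (with 0-based indices: strictly increasing
tuples of edge indices all `< n-1`). -/
def esum (R : Type) [CommRing R] (n k : ℕ) : Tens R n k :=
  ∑ f : Fin k → Fin n,
    if (∀ p q : Fin k, p < q → f p < f q) ∧ (∀ p : Fin k, ((f p) : ℕ) + 1 < n) then
      bt R (fun p => Cell.e (f p))
    else 0

/-- The `A_∞`-coalgebra operations on basis cells: `DeltaB R n 2` is the Kravatz diagonal
`Δ₂` and for `k ≥ 3`, `DeltaB R n k` is `Δ_k`, which vanishes on vertices and edges and sends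
`P` to `Σ_{0<i_1<⋯<i_k<n} e_{i_1} ⊗ ⋯ ⊗ e_{i_k}`. -/
def DeltaB (R : Type) [CommRing R] (n : ℕ) (k : ℕ) : Cell n → Tens R n k
  | .v i => if k = 2 then bt R (fun _ => Cell.v i) else 0
  | .e i =>
      if k = 2 then
        if h : (i : ℕ) + 1 < n then
          bt R (fun p => if (p : ℕ) = 0 then Cell.v i else Cell.e i) +
            bt R (fun p => if (p : ℕ) = 0 then Cell.e i else Cell.v ⟨(i : ℕ) + 1, h⟩)
        else
          bt R (fun p => if (p : ℕ) = 0 then Cell.v ⟨0, i.pos⟩ else Cell.e i) +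
            bt R (fun p => if (p : ℕ) = 0 then Cell.e i else Cell.v i)
      else 0
  | .F =>
      esum R n k +
        (if h : k = 2 ∧ 0 < n then
          bt R (fun p => if (p : ℕ) = 0 then Cell.v ⟨0, h.2⟩ else Cell.F) +
            bt R (fun p => if (p : ℕ) = 0 then Cell.F
                  else Cell.v ⟨n - 1, Nat.sub_lt h.2 Nat.one_pos⟩)
        else 0)

/-- Extension of a map defined on basis tensors to a linear map. -/
def lext (R : Type) [CommRing R] (n : ℕ) {k m : ℕ} (φ : (Fin k → Cell n) → Tens R n m) :
    Tens R n k →ₗ[R] Tens R n m :=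
  Finsupp.linearCombination R φ

/-- Splicing a `j`-tuple into a `k`-tuple at position `a`, producing an `m`-tuple
(meaningful when `m = k + j - 1` and `a < k`). -/
def splice {n k j : ℕ} (m a : ℕ) (x : Fin k → Cell n) (y : Fin j → Cell n) :
    Fin m → Cell n := fun q =>
  if h1 : (q : ℕ) < a ∧ (q : ℕ) < k then x ⟨q, h1.2⟩
  else if h2 : a ≤ (q : ℕ) ∧ (q : ℕ) - a < j then y ⟨(q : ℕ) - a, h2.2⟩
  else if h3 : (q : ℕ) + 1 - j < k then x ⟨(q : ℕ) + 1 - j, h3⟩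
  else Cell.F

/-- `opp R n k m j a p g` is the linear map `1^{⊗a} ⊗ g ⊗ 1^{⊗(k-1-a)} : C^{⊗k} → C^{⊗m}`
(meaningful when `m = k + j - 1`), where `g` is the basis-level description of an operation
`C → C^{⊗j}` of degree `p`, evaluated with the Koszul sign convention. -/
def opp (R : Type) [CommRing R] (n : ℕ) (k m j a : ℕ) (p : ℤ) (g : Cell n → Tens R n j) :
    Tens R n k →ₗ[R] Tens R n m :=
  lext R n fun x =>
    if ha : a < k then
      sgn R (p * ∑ q : Fin k, if (q : ℕ) < a then (degC (x q) : ℤ) else 0) •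
        Finsupp.mapDomain (splice m a x) (g (x ⟨a, ha⟩))
    else 0

/-- `Δ_k` as a linear map `C → C^{⊗k}`. -/
def Dmap (R : Type) [CommRing R] (n k : ℕ) : Tens R n 1 →ₗ[R] Tens R n k :=
  lext R n fun x => DeltaB R n k (x 0)

/-- The boundary `∂` as a linear map `C → C`. -/
def bdry (R : Type) [CommRing R] (n : ℕ) : Tens R n 1 →ₗ[R] Tens R n 1 :=
  lext R n fun x => dB R n (x 0)

/-- The top cell `P` as a chain. -/
def cellP (R : Type) [CommRing R] (n : ℕ) : Tens R n 1 := bt R (fun _ => Cell.F)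

end


/-!
It suffices to check `Δ₂ ∂ c = (∂ ⊗ 1 + 1 ⊗ ∂) Δ₂ c` on each cell `c`. On a vertex both sides
vanish, and on an edge from `a` to `b` both sides equal `b ⊗ b - a ⊗ a`. On the 2-cell, the terms
`(∂ ⊗ 1)(e_i ⊗ e_j)` summed over `i < j` telescope to `(v_j - v_1) ⊗ e_j`, and the terms
`(1 ⊗ ∂)(e_i ⊗ e_j)` summed over `j > i` telescope to `-e_i ⊗ (v_n - v_{i+1})`; adding the
boundaries of `v_1 ⊗ P` and `P ⊗ v_n` leaves `Σ_{i<n} (v_i ⊗ e_i + e_i ⊗ v_{i+1}) - v_1 ⊗ e_n -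
e_n ⊗ v_n`, which is `Δ₂ ∂ P`.
-/

open Finset Fin.NatCast

/-- With `a i j = v_i ⊗ e_j` and `b i j = e_i ⊗ v_j` in an `(N+1)`-gon, the left side is `Δ₂ ∂ P`
and the right side is `(∂ ⊗ 1 + 1 ⊗ ∂) Δ₂ P`. -/
theorem sum_telescope_polygon {M : Type*} [AddCommGroup M] (N : ℕ) (a b : ℕ → ℕ → M) :
    ∑ i ∈ range N, (a i i + b i (i + 1)) - (a 0 N + b N N) =
      ∑ i ∈ range N, ∑ j ∈ Ico (i + 1) N, ((a (i + 1) j - a i j) - (b i (j + 1) - b i j)) +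
        (∑ i ∈ range N, a 0 i - a 0 N) + (∑ i ∈ range N, b i N - b N N) := by
  have ha : ∑ i ∈ range N, ∑ j ∈ Ico (i + 1) N, (a (i + 1) j - a i j) =
      ∑ j ∈ range N, (a j j - a 0 j) := by
    rw [range_eq_Ico, sum_Ico_Ico_comm']
    exact sum_congr rfl fun j _ => by rw [← range_eq_Ico, sum_range_sub (a · j)]
  have hb : ∑ i ∈ range N, ∑ j ∈ Ico (i + 1) N, (b i (j + 1) - b i j) =
      ∑ i ∈ range N, (b i N - b i (i + 1)) :=
    sum_congr rfl fun i hi => sum_Ico_sub (b i) (mem_range.1 hi)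
  simp only [sum_sub_distrib, sum_add_distrib] at ha hb ⊢
  rw [ha, hb]
  abel

theorem sgn_eq_neg_one_pow {R : Type} [CommRing R] (m : ℤ) : sgn R m = (-1) ^ m.natAbs := by
  rcases Int.even_or_odd m with h | h
  · simp [sgn, h, (Int.natAbs_even.2 h).neg_one_pow]
  · simp [sgn, Int.not_even_iff_odd.2 h, (Int.natAbs_odd.2 h).neg_one_pow]

noncomputable section BasisTensors

variable {R : Type} [CommRing R] {n : ℕ}

def bt₁ (R : Type) [CommRing R] (c : Cell n) : Tens R n 1 := bt R fun _ => c

def bt₂ (R : Type) [CommRing R] (c d : Cell n) : Tens R n 2 := bt R ![c, d]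

/-- `∂ ⊗ 1 + 1 ⊗ ∂` on `C ⊗ C`. -/
def bdry₂ (R : Type) [CommRing R] (n : ℕ) : Tens R n 2 →ₗ[R] Tens R n 2 :=
  opp R n 2 2 1 0 (-1) (dB R n) + opp R n 2 2 1 1 (-1) (dB R n)

/-- `x ↦ x ⊗ d`. -/
def tmulCell (R : Type) [CommRing R] (d : Cell n) : Tens R n 1 →ₗ[R] Tens R n 2 :=
  Finsupp.lmapDomain R R fun y => ![y 0, d]

/-- `x ↦ c ⊗ x`. -/
def cellTmul (R : Type) [CommRing R] (c : Cell n) : Tens R n 1 →ₗ[R] Tens R n 2 :=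
  Finsupp.lmapDomain R R fun y => ![c, y 0]

theorem bt_ite_eq_bt₂ (c d : Cell n) :
    bt R (fun p : Fin 2 => if p = 0 then c else d) = bt₂ R c d := by
  congr 1
  funext p
  fin_cases p <;> rfl

theorem tmulCell_bt₁ (c d : Cell n) : tmulCell R d (bt₁ R c) = bt₂ R c d := by
  simp [tmulCell, bt₁, bt₂, bt]

theorem cellTmul_bt₁ (c d : Cell n) : cellTmul R c (bt₁ R d) = bt₂ R c d := by
  simp [cellTmul, bt₁, bt₂, bt]

theorem lext_bt {k m : ℕ} (φ : (Fin k → Cell n) → Tens R n m) (x : Fin k → Cell n) :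
    lext R n φ (bt R x) = φ x := by
  simp [lext, bt]

theorem Dmap_bt₁ (k : ℕ) (c : Cell n) : Dmap R n k (bt₁ R c) = DeltaB R n k c :=
  lext_bt _ _

theorem bdry_bt₁ (c : Cell n) : bdry R n (bt₁ R c) = dB R n c :=
  lext_bt _ _

theorem linearMap_ext_bt₁ {M : Type*} [AddCommGroup M] [Module R M]
    {f g : Tens R n 1 →ₗ[R] M} (h : ∀ c, f (bt₁ R c) = g (bt₁ R c)) : f = g := by
  refine Finsupp.lhom_ext fun x r => ?_
  have hx : x = fun _ => x 0 := funext fun p => congrArg x (Subsingleton.elim p 0)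
  rw [← mul_one r, ← Finsupp.smul_single', map_smul, map_smul, hx]
  exact congrArg (r • ·) (h (x 0))

theorem bdry₂_bt₂ (c d : Cell n) :
    bdry₂ R n (bt₂ R c d) =
      tmulCell R d (dB R n c) + (-1 : R) ^ degC c • cellTmul R c (dB R n d) := by
  have h₀ (y : Fin 1 → Cell n) : splice 2 0 ![c, d] y = ![y 0, d] := by
    funext p; fin_cases p <;> simp [splice]
  have h₁ (y : Fin 1 → Cell n) : splice 2 1 ![c, d] y = ![c, y 0] := by
    funext p; fin_cases p <;> simp [splice]
  simp [bdry₂, opp, bt₂, lext_bt, sgn_eq_neg_one_pow, tmulCell, cellTmul, funext h₀, funext h₁]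

theorem DeltaB_two_v (i : Fin n) : DeltaB R n 2 (.v i) = bt₂ R (.v i) (.v i) := by
  simp only [DeltaB, if_true, bt₂]
  congr 1
  funext p
  fin_cases p <;> rfl

theorem Dmap_dB_v (i : Fin n) :
    Dmap R n 2 (dB R n (.v i)) = bdry₂ R n (DeltaB R n 2 (.v i)) := by
  simp [DeltaB_two_v, bdry₂_bt₂, dB]

theorem Dmap_dB_of_edge {a b : Fin n} {e : Cell n}
    (hd : dB R n e = bt₁ R (.v b) - bt₁ R (.v a))
    (hΔ : DeltaB R n 2 e = bt₂ R (.v a) e + bt₂ R e (.v b)) (he : degC e = 1) :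
    Dmap R n 2 (dB R n e) = bdry₂ R n (DeltaB R n 2 e) := by
  rw [hΔ, map_add, bdry₂_bt₂, bdry₂_bt₂, hd, he]
  simp [Dmap_bt₁, DeltaB_two_v, tmulCell_bt₁, cellTmul_bt₁, dB, degC]

end BasisTensors

namespace Cell

/-- The vertex with 0-based index `i mod (N + 1)` of the `(N+1)`-gon. -/
def vertex (N i : ℕ) : Cell (N + 1) := .v i

/-- The edge with 0-based index `i mod (N + 1)` of the `(N+1)`-gon. -/
def edge (N i : ℕ) : Cell (N + 1) := .e i

theorem edge_val {N : ℕ} (i : Fin (N + 1)) : edge N i = .e i := by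
  simp [edge]

end Cell

section Polygon

open Cell

variable {R : Type} [CommRing R] {N : ℕ}

theorem dB_vertex (i : ℕ) : dB R (N + 1) (vertex N i) = 0 := rfl

theorem degC_vertex (i : ℕ) : degC (vertex N i) = 0 := rfl

theorem degC_edge (i : ℕ) : degC (edge N i) = 1 := rfl

theorem dB_edge_of_lt {i : ℕ} (h : i < N) :
    dB R (N + 1) (edge N i) = bt₁ R (vertex N (i + 1)) - bt₁ R (vertex N i) := by
  have hi : ((i : Fin (N + 1)) : ℕ) = i := Fin.val_cast_of_lt (by omega)
  have hs : (⟨i + 1, by omega⟩ : Fin (N + 1)) = ((i + 1 : ℕ) : Fin (N + 1)) :=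
    (Fin.natCast_eq_mk (by omega)).symm
  simp [dB, edge, vertex, hi, h, hs, bt₁]

theorem dB_edge_self : dB R (N + 1) (edge N N) = bt₁ R (vertex N N) - bt₁ R (vertex N 0) := by
  simp [dB, bt₁, edge, vertex]

theorem DeltaB_two_edge_of_lt {i : ℕ} (h : i < N) :
    DeltaB R (N + 1) 2 (edge N i) =
      bt₂ R (vertex N i) (edge N i) + bt₂ R (edge N i) (vertex N (i + 1)) := by
  have hi : ((i : Fin (N + 1)) : ℕ) = i := Fin.val_cast_of_lt (by omega)
  have hs : (⟨i + 1, by omega⟩ : Fin (N + 1)) = ((i + 1 : ℕ) : Fin (N + 1)) :=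
    (Fin.natCast_eq_mk (by omega)).symm
  simp [DeltaB, edge, vertex, hi, h, hs, bt_ite_eq_bt₂]

theorem DeltaB_two_edge_self :
    DeltaB R (N + 1) 2 (edge N N) =
      bt₂ R (vertex N 0) (edge N N) + bt₂ R (edge N N) (vertex N N) := by
  simp [DeltaB, edge, vertex, bt_ite_eq_bt₂]

theorem dB_F : dB R (N + 1) .F = ∑ i ∈ range N, bt₁ R (edge N i) - bt₁ R (edge N N) := by
  rw [← Fin.sum_univ_eq_sum_range]
  simp [dB, bt₁, edge, Fin.sum_univ_castSucc, Fin.coe_eq_castSucc, sub_eq_add_neg]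

theorem esum_two :
    esum R (N + 1) 2 = ∑ i ∈ range N, ∑ j ∈ Ico (i + 1) N, bt₂ R (edge N i) (edge N j) := by
  have hIco (i : ℕ) : Ico (i + 1) N = (range N).filter (i < ·) := by
    ext j
    simp only [mem_Ico, mem_filter, mem_range]
    omega
  have hbt (a b : Fin N) : (bt R fun p => Cell.e (![a.castSucc, b.castSucc] p)) =
      bt₂ R (edge N a) (edge N b) := by
    congr 1
    funext p
    fin_cases p <;> simp [edge, Fin.coe_eq_castSucc]
  rw [esum, ← (piFinTwoEquiv fun _ => Fin (N + 1)).symm.sum_comp, Fintype.sum_prod_type]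
  simp [Fin.forall_fin_two, Fin.sum_univ_castSucc, hbt, hIco, sum_filter, sum_range]

theorem DeltaB_two_F : DeltaB R (N + 1) 2 .F =
    ∑ i ∈ range N, ∑ j ∈ Ico (i + 1) N, bt₂ R (edge N i) (edge N j) +
      bt₂ R (vertex N 0) .F + bt₂ R .F (vertex N N) := by
  rw [← esum_two]
  simp [DeltaB, vertex, bt_ite_eq_bt₂, add_assoc, Fin.last]

theorem bdry₂_edge_edge {i j : ℕ} (hi : i < N) (hj : j < N) :
    bdry₂ R (N + 1) (bt₂ R (edge N i) (edge N j)) =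
      (bt₂ R (vertex N (i + 1)) (edge N j) - bt₂ R (vertex N i) (edge N j)) -
        (bt₂ R (edge N i) (vertex N (j + 1)) - bt₂ R (edge N i) (vertex N j)) := by
  rw [bdry₂_bt₂, dB_edge_of_lt hi, dB_edge_of_lt hj, degC_edge]
  simp only [map_sub, tmulCell_bt₁, cellTmul_bt₁, pow_one, neg_one_smul]
  abel

theorem Dmap_dB_F_succ :
    Dmap R (N + 1) 2 (dB R (N + 1) .F) = bdry₂ R (N + 1) (DeltaB R (N + 1) 2 .F) := by
  have hlhs : Dmap R (N + 1) 2 (dB R (N + 1) .F) =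
      ∑ i ∈ range N, (bt₂ R (vertex N i) (edge N i) + bt₂ R (edge N i) (vertex N (i + 1))) -
        (bt₂ R (vertex N 0) (edge N N) + bt₂ R (edge N N) (vertex N N)) := by
    rw [dB_F, map_sub, map_sum, Dmap_bt₁, DeltaB_two_edge_self]
    congr 1
    exact sum_congr rfl fun i hi => by rw [Dmap_bt₁, DeltaB_two_edge_of_lt (mem_range.1 hi)]
  have hrhs : bdry₂ R (N + 1) (DeltaB R (N + 1) 2 .F) =
      ∑ i ∈ range N, ∑ j ∈ Ico (i + 1) N,
          ((bt₂ R (vertex N (i + 1)) (edge N j) - bt₂ R (vertex N i) (edge N j)) -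
            (bt₂ R (edge N i) (vertex N (j + 1)) - bt₂ R (edge N i) (vertex N j))) +
        (∑ i ∈ range N, bt₂ R (vertex N 0) (edge N i) - bt₂ R (vertex N 0) (edge N N)) +
        (∑ i ∈ range N, bt₂ R (edge N i) (vertex N N) - bt₂ R (edge N N) (vertex N N)) := by
    rw [DeltaB_two_F, map_add, map_add, map_sum, bdry₂_bt₂, bdry₂_bt₂, dB_F, dB_vertex,
      dB_vertex, degC_vertex]
    congr 1
    · congr 1
      · refine sum_congr rfl fun i hi => ?_
        rw [map_sum]
        refine sum_congr rfl fun j hj => ?_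
        rw [mem_Ico] at hj
        exact bdry₂_edge_edge (mem_range.1 hi) (by omega)
      · simp [cellTmul_bt₁]
    · simp [tmulCell_bt₁]
  rw [hlhs, hrhs]
  exact sum_telescope_polygon N (fun i j => bt₂ R (vertex N i) (edge N j))
    (fun i j => bt₂ R (edge N i) (vertex N j))

end Polygon

theorem Dmap_dB_F {R : Type} [CommRing R] (n : ℕ) :
    Dmap R n 2 (dB R n .F) = bdry₂ R n (DeltaB R n 2 .F) := by
  cases n with
  | zero => simp [dB, DeltaB, esum]
  | succ N => exact Dmap_dB_F_succ

theorem kravatz_diagonal_chain_map_general (R : Type) [CommRing R] (n : ℕ) :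
    (Dmap R n 2) ∘ₗ (bdry R n) =
      (opp R n 2 2 1 0 (-1) (dB R n) + opp R n 2 2 1 1 (-1) (dB R n)) ∘ₗ (Dmap R n 2) := by
  refine linearMap_ext_bt₁ fun c => ?_
  change Dmap R n 2 (bdry R n (bt₁ R c)) = bdry₂ R n (Dmap R n 2 (bt₁ R c))
  rw [bdry_bt₁, Dmap_bt₁]
  rcases c with i | i | _
  · exact Dmap_dB_v i
  · obtain ⟨N, rfl⟩ := Nat.exists_eq_add_one.2 i.pos
    rw [← Cell.edge_val]
    rcases (Nat.lt_succ_iff.1 i.isLt).lt_or_eq with h | h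
    · exact Dmap_dB_of_edge (dB_edge_of_lt h) (DeltaB_two_edge_of_lt h) rfl
    · rw [h]
      exact Dmap_dB_of_edge dB_edge_self DeltaB_two_edge_self rfl
  · exact Dmap_dB_F n

/-- The Kravatz diagonal is a chain map:
`Δ₂ ∘ ∂ = (∂ ⊗ 1 + 1 ⊗ ∂) ∘ Δ₂` as maps `C → C ⊗ C`, where `1 ⊗ ∂` is evaluated with the
Koszul sign convention; i.e. `∂` is a coderivation of `Δ₂` and the `A_∞`-coalgebra relation
holds in arity 2. -/
theorem kravatz_diagonal_chain_map (R : Type) [CommRing R] (n : ℕ) (hn : 3 ≤ n) :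
    (Dmap R n 2) ∘ₗ (bdry R n) =
      (opp R n 2 2 1 0 (-1) (dB R n) + opp R n 2 2 1 1 (-1) (dB R n)) ∘ₗ (Dmap R n 2) :=
  kravatz_diagonal_chain_map_general R n
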